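/- Let G be a finite connected graph with only univalent and trivalent vertices, with equal numbers u = t of univalent and trivalent vertices, such that every univalent vertex is adjacent to a trivalent vertex via an A-labelled half-edge, every trivalent vertex is adjacent to a univalent vertex, and no edge joins a T-labelled half-edge of one trivalent vertex to a B-labelled half-edge of another. Then t is even and G is determined up to labelled homeomorphism by t/2: it is a cycle of 2k trivalent vertices (k = t/2) alternating T-to-T and B-to-B connections, with a pendant univalent vertex attached to the A-half-edge of each trivalent vertex, together with the case k = 0 where G is a circle. -/
import Mathlib


/-- Labels for the half-edges at trivalent vertices. -/
inductive Lbl | T | B | A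
deriving DecidableEq

/-- The vertex at which the dart (half-edge) `d` is located; a loop gives two darts. -/
def gvert {V E : Type*} (ends : E → V × V) (d : E × Bool) : V :=
  if d.2 then (ends d.1).1 else (ends d.1).2

/-- The valence of a vertex: the number of incident half-edges, loops counted twice. -/
def gdeg {V E : Type*} [Fintype E] [DecidableEq V] (ends : E → V × V) (v : V) : ℕ :=
  (Finset.univ.filter (fun d : E × Bool => gvert ends d = v)).card

/-- Connectivity of a multigraph. -/
def gconn {V E : Type*} (ends : E → V × V) : Prop :=
  ∀ v w : V,
    Relation.ReflTransGen (fun a b => ∃ e : E, ends e = (a, b) ∨ ends e = (b, a)) v w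

/-! The standard model with `2k` trivalent and `2k` univalent vertices: a cycle of
`2k` trivalent vertices whose consecutive connections alternate T-to-T and B-to-B,
with a pendant univalent vertex attached to the A-half-edge of each trivalent
vertex.  For `k = 0` all the types are empty (the vertexless case). -/

/-- Vertices of the model: `inl` = trivalent (on the cycle), `inr` = univalent. -/
def VM (k : ℕ) := Fin (2 * k) ⊕ Fin (2 * k)

/-- Edges of the model: `inl i` = cycle edge from vertex `i` to vertex `i+1`,
`inr i` = pendant edge at vertex `i`. -/
def EM (k : ℕ) := Fin (2 * k) ⊕ Fin (2 * k)

/-- Endpoints of the model edges. -/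
def endsM (k : ℕ) : EM k → VM k × VM k
  | Sum.inl i => (Sum.inl i, Sum.inl (finRotate (2 * k) i))
  | Sum.inr i => (Sum.inr i, Sum.inl i)

/-- Labels of the model half-edges: the cycle edge `i` is labelled `T` at both its
ends if `i` is even and `B` at both its ends if `i` is odd; pendant edges are
labelled `A` at their trivalent end. -/
def labM (k : ℕ) : EM k × Bool → Lbl
  | (Sum.inl i, _) => if (i : ℕ) % 2 = 0 then Lbl.T else Lbl.B
  | (Sum.inr _, _) => Lbl.A

private lemma rot_val {n : ℕ} (hn : 0 < n) (i : Fin n) :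
    ((finRotate n i : ℕ)) = ((i : ℕ) + 1) % n := by
  cases n with
  | zero => omega
  | succ n =>
    rw [finRotate_succ_apply, Fin.add_def, Fin.val_one', Nat.add_mod (i : ℕ) 1,
      Nat.mod_eq_of_lt i.isLt]

private lemma hdd {E : Type*} (d d' : E × Bool) (h : d.1 = d'.1) :
    d' = d ∨ d' = (d.1, !d.2) := by
  rcases d with ⟨e, b⟩
  rcases d' with ⟨e', b'⟩
  simp only at h
  subst h
  cases b <;> cases b' <;> simp


private def cseq {X : Type*} (f g : X → X) (x0 : X) : ℕ → X
  | 0 => x0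
  | n+1 => if n % 2 = 0 then f (cseq f g x0 n) else g (cseq f g x0 n)

theorem cycle_lemma {X : Type*} [Fintype X] [DecidableEq X] [Nonempty X]
    (f g : X → X) (hf : ∀ x, f (f x) = x) (hg : ∀ x, g (g x) = x)
    (hf' : ∀ x, f x ≠ x) (hg' : ∀ x, g x ≠ x)
    (hconn : ∀ x y : X, Relation.ReflTransGen (fun a b => b = f a ∨ b = g a) x y) :
    ∃ k : ℕ, 0 < k ∧ ∃ a : ℕ → X,
      (∀ n, a (n + 2*k) = a n) ∧
      (∀ i j, i < 2*k → j < 2*k → a i = a j → i = j) ∧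
      (∀ x, ∃ n, n < 2*k ∧ a n = x) ∧
      (∀ n, n % 2 = 0 → f (a n) = a (n+1)) ∧
      (∀ n, n % 2 = 1 → g (a n) = a (n+1)) := by
  classical
  set x0 := Classical.arbitrary X with hx0
  set a : ℕ → X := cseq f g x0 with ha
  set F : ℕ → X → X := fun n => if n % 2 = 0 then f else g with hF
  have Fstep : ∀ n, a (n+1) = F n (a n) := by
    intro n
    show cseq f g x0 (n+1) = _
    simp only [cseq, hF]
    split <;> rfl
  have Finv : ∀ n x, F n (F n x) = x := by
    intro n x; simp only [hF]; split
    · exact hf x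
    · exact hg x
  have Ffix : ∀ n x, F n x ≠ x := by
    intro n x; simp only [hF]; split
    · exact hf' x
    · exact hg' x
  have Fpar : ∀ i j, i % 2 = j % 2 → F i = F j := by
    intro i j h; simp only [hF, h]
  have backstep : ∀ i j, i % 2 = j % 2 → a (i+1) = a (j+1) → a i = a j := by
    intro i j hp h
    have h1 : a i = F i (a (i+1)) := by rw [Fstep i, Finv]
    have h2 : a j = F j (a (j+1)) := by rw [Fstep j, Finv]
    rw [h1, h2, h, Fpar i j hp]
  have shift : ∀ s i j, i % 2 = j % 2 → a i = a j → a (i + s) = a (j + s) := by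
    intro s
    induction s with
    | zero => intro i j _ h; simpa using h
    | succ s ih =>
      intro i j hp h
      have h1 := ih i j hp h
      have hp2 : (i + s) % 2 = (j + s) % 2 := by omega
      rw [show i + (s+1) = (i+s) + 1 by ring, show j + (s+1) = (j+s) + 1 by ring,
        Fstep (i+s), Fstep (j+s), h1, Fpar _ _ hp2]
  have backshift : ∀ s i j, i % 2 = j % 2 → a (i + s) = a (j + s) → a i = a j := by
    intro s
    induction s with
    | zero => intro i j _ h; simpa using h
    | succ s ih =>
      intro i j hp h
      apply ih i j hp
      apply backstep (i+s) (j+s) (by omega)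
      rw [show (i+s) + 1 = i + (s+1) by ring, show (j+s) + 1 = j + (s+1) by ring]
      exact h
  -- existence of a positive even period
  have hex : ∃ n, 0 < n ∧ n % 2 = 0 ∧ a n = a 0 := by
    obtain ⟨i, j, hij, heq⟩ := Fintype.exists_ne_map_eq_of_card_lt
      (fun n : Fin (Fintype.card X + 1) => a (2 * (n : ℕ))) (by simp)
    rcases Nat.lt_or_ge (i : ℕ) (j : ℕ) with h | h
    · refine ⟨2 * ((j:ℕ) - (i:ℕ)), by omega, by omega, ?_⟩
      apply backshift (2 * (i:ℕ)) _ 0 (by omega)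
      rw [show 2 * ((j:ℕ) - (i:ℕ)) + 2*(i:ℕ) = 2*(j:ℕ) by omega]
      simpa using heq.symm
    · have h' : (j:ℕ) < (i:ℕ) := by
        rcases Nat.lt_or_ge (j:ℕ) (i:ℕ) with h2 | h2
        · exact h2
        · exact absurd (Fin.ext (le_antisymm h2 h)) hij
      refine ⟨2 * ((i:ℕ) - (j:ℕ)), by omega, by omega, ?_⟩
      apply backshift (2 * (j:ℕ)) _ 0 (by omega)
      rw [show 2 * ((i:ℕ) - (j:ℕ)) + 2*(j:ℕ) = 2*(i:ℕ) by omega]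
      simpa using heq
  set m := Nat.find hex with hm
  obtain ⟨hm0, hm2, hma⟩ : 0 < m ∧ m % 2 = 0 ∧ a m = a 0 := Nat.find_spec hex
  have hmin : ∀ n, 0 < n → n % 2 = 0 → a n = a 0 → m ≤ n := by
    intro n h1 h2 h3
    by_contra hc
    exact Nat.find_min hex (by omega) ⟨h1, h2, h3⟩
  have per : ∀ n, a (n + m) = a n := by
    intro n
    have := shift n 0 m (by omega) hma.symm
    rw [Nat.zero_add, Nat.add_comm m n] at this
    exact this.symm
  have amod : ∀ n, a n = a (n % m) := by
    intro n
    induction n using Nat.strong_induction_on with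
    | _ n ih =>
      rcases Nat.lt_or_ge n m with h | h
      · rw [Nat.mod_eq_of_lt h]
      · have h1 : n - m + m = n := Nat.sub_add_cancel h
        have h2 := per (n - m)
        rw [h1] at h2
        rw [h2, ih (n-m) (by omega), ← Nat.mod_eq_sub_mod h]
  -- injectivity on [0, m)
  have inj : ∀ i j, i < m → j < m → a i = a j → i = j := by
    have key : ∀ i j, i < j → j < m → a i = a j → False := by
      intro i j hij hjm heq
      rcases eq_or_ne (i % 2) (j % 2) with hp | hp
      · have h0 : a 0 = a (j - i) := by
          apply backshift i 0 (j - i) (by omega)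
          rw [show (j - i) + i = j by omega]
          simpa using heq
        exact absurd (hmin (j - i) (by omega) (by omega) h0.symm) (by omega)
      · have hrefl : ∀ s, s + s ≤ j - i → a (i + s) = a (j - s) := by
          intro s
          induction s with
          | zero => intro _; simpa using heq
          | succ s ih =>
            intro hs
            have h1 := ih (by omega)
            have hp2 : (i + s) % 2 = (j - s - 1) % 2 := by omega
            have h2 : a (j - s) = F (i + s) (a (j - s - 1)) := by
              rw [Fpar _ _ hp2, ← Fstep (j - s - 1),
                show j - s - 1 + 1 = j - s by omega]
            rw [show i + (s+1) = i + s + 1 by ring, Fstep (i+s), h1, h2, Finv,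
              show j - (s+1) = j - s - 1 by omega]
        set s := (j - i) / 2 with hs
        have h1 := hrefl s (by omega)
        rw [show j - s = i + s + 1 by omega, Fstep (i+s)] at h1
        exact Ffix (i+s) (a (i+s)) h1.symm
    intro i j hi hj heq
    rcases Nat.lt_trichotomy i j with h | h | h
    · exact absurd (key i j h hj heq) (fun x => x)
    · exact h
    · exact absurd (key j i h hi heq.symm) (fun x => x)
  -- surjectivity
  have surj0 : ∀ x : X, ∃ n, a n = x := by
    intro x
    have hc := hconn x0 x
    induction hc with
    | refl => exact ⟨0, rfl⟩
    | @tail b c hbc hrel ih =>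
      obtain ⟨n, hn⟩ := ih
      rcases hrel with h | h
      · rcases eq_or_ne (n % 2) 0 with hp | hp
        · refine ⟨n + 1, ?_⟩
          have hFn : F n = f := by rw [hF]; simp [hp]
          rw [Fstep n, hFn, hn, h]
        · refine ⟨n - 1, ?_⟩
          have h1 : a n = f (a (n - 1)) := by
            have h2 := Fstep (n - 1)
            rw [show n - 1 + 1 = n by omega] at h2
            rw [h2, hF]
            simp [show (n-1) % 2 = 0 by omega]
          rw [h, ← hn, h1, hf]
      · rcases eq_or_ne (n % 2) 1 with hp | hp
        · refine ⟨n + 1, ?_⟩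
          have hFn : F n = g := by rw [hF]; simp [show ¬ n % 2 = 0 by omega]
          rw [Fstep n, hFn, hn, h]
        · refine ⟨n + m - 1, ?_⟩
          have h1 : a (n + m) = g (a (n + m - 1)) := by
            have h2 := Fstep (n + m - 1)
            rw [show n + m - 1 + 1 = n + m by omega] at h2
            rw [h2, hF]
            simp [show ¬ (n + m - 1) % 2 = 0 by omega]
          have h2 : a (n + m) = b := by rw [per, hn]
          rw [h, ← h2, h1, hg]
  refine ⟨m / 2, by omega, a, ?_, ?_, ?_, ?_, ?_⟩
  · intro n; rw [show 2 * (m/2) = m by omega]; exact per n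
  · intro i j hi hj; exact inj i j (by omega) (by omega)
  · intro x
    obtain ⟨n, hn⟩ := surj0 x
    exact ⟨n % m, by have := Nat.mod_lt n hm0; omega, by rw [← amod n]; exact hn⟩
  · intro n hp
    rw [Fstep n, hF]; simp [hp]
  · intro n hp
    rw [Fstep n, hF]; simp [show ¬ n % 2 = 0 by omega]


/-- Let `G` be a finite connected graph with only univalent and trivalent vertices,
`u = t`, labelled T/B/A at trivalent vertices, such that every univalent vertex is
attached through an A-labelled half-edge of a trivalent vertex, every trivalent
vertex is adjacent to a univalent vertex, and no edge joins a T-labelled half-edge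
to a B-labelled half-edge.  Then `t` is even and `G` is isomorphic, respecting the
labels at trivalent vertices, to the standard model determined by `k = t / 2`. -/
theorem stmt_12 {V E : Type*} [Fintype V] [Fintype E] [DecidableEq V]
    (ends : E → V × V) (lab : E × Bool → Lbl)
    (hconn : gconn ends)
    (hval : ∀ v : V, gdeg ends v = 1 ∨ gdeg ends v = 3)
    (hlab : ∀ v : V, gdeg ends v = 3 →
      ∀ l : Lbl, ∃! d : E × Bool, gvert ends d = v ∧ lab d = l)
    (u t : ℕ)
    (hu : u = (Finset.univ.filter (fun v : V => gdeg ends v = 1)).card)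
    (ht : t = (Finset.univ.filter (fun v : V => gdeg ends v = 3)).card)
    (hut : u = t)
    -- every univalent vertex is attached through an A-labelled half-edge
    -- at a trivalent vertex:
    (hAattach : ∀ d : E × Bool, gdeg ends (gvert ends d) = 1 →
      gdeg ends (gvert ends (d.1, !d.2)) = 3 ∧ lab (d.1, !d.2) = Lbl.A)
    -- every trivalent vertex is adjacent to a univalent vertex:
    (hTadj : ∀ v : V, gdeg ends v = 3 →
      ∃ d : E × Bool, gvert ends d = v ∧ gdeg ends (gvert ends (d.1, !d.2)) = 1)
    -- no edge joins a T-labelled half-edge to a B-labelled half-edge: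
    (hnoTB : ∀ (e : E) (b : Bool),
      gdeg ends (gvert ends (e, b)) = 3 → gdeg ends (gvert ends (e, !b)) = 3 →
      ¬(lab (e, b) = Lbl.T ∧ lab (e, !b) = Lbl.B)) :
    ∃ k : ℕ, t = 2 * k ∧
      ∃ (eV : V ≃ VM k) (eE : E ≃ EM k),
        ∀ e : E,
          (endsM k (eE e) = (eV (ends e).1, eV (ends e).2) ∧
            ∀ b : Bool, gdeg ends (gvert ends (e, b)) = 3 →
              lab (e, b) = labM k (eE e, b)) ∨
          (endsM k (eE e) = (eV (ends e).2, eV (ends e).1) ∧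
            ∀ b : Bool, gdeg ends (gvert ends (e, b)) = 3 →
              lab (e, b) = labM k (eE e, !b)) := by
  classical
  have hval1 : ∀ v : V, ¬ gdeg ends v = 3 → gdeg ends v = 1 :=
    fun v h => (hval v).resolve_right h
  -- the unique dart at a univalent vertex
  have hudart : ∀ v : V, gdeg ends v = 1 → ∃! d : E × Bool, gvert ends d = v := by
    intro v hv
    unfold gdeg at hv
    obtain ⟨d, hd⟩ := Finset.card_eq_one.mp hv
    refine ⟨d, ?_, ?_⟩
    · have h1 : d ∈ Finset.univ.filter (fun d : E × Bool => gvert ends d = v) := by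
        rw [hd]; simp
      simpa using h1
    · intro d' hd'
      have h1 : d' ∈ Finset.univ.filter (fun d : E × Bool => gvert ends d = v) := by
        simp [hd']
      rw [hd] at h1; simpa using h1
  choose ud hudv hudu using fun (v : V) (hv : gdeg ends v = 1) => hudart v hv
  -- the unique dart with a given label at a trivalent vertex
  choose dart hdart using fun (v : V) (hv : gdeg ends v = 3) (l : Lbl) => hlab v hv l
  have hdv : ∀ (v) (hv : gdeg ends v = 3) (l), gvert ends (dart v hv l) = v :=
    fun v hv l => (hdart v hv l).1.1
  have hdl : ∀ (v) (hv : gdeg ends v = 3) (l), lab (dart v hv l) = l :=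
    fun v hv l => (hdart v hv l).1.2
  have hdu : ∀ (v) (hv : gdeg ends v = 3) (l) (d : E × Bool),
      gvert ends d = v → lab d = l → d = dart v hv l :=
    fun v hv l d h1 h2 => (hdart v hv l).2 d ⟨h1, h2⟩
  -- the opposite of an A-dart at a trivalent vertex is univalent
  have labA_univ : ∀ d : E × Bool, gdeg ends (gvert ends d) = 3 → lab d = Lbl.A →
      gdeg ends (gvert ends (d.1, !d.2)) = 1 := by
    intro d h3 hA
    obtain ⟨d0, hd0v, hd0u⟩ := hTadj (gvert ends d) h3
    have h5 := hAattach (d0.1, !d0.2) hd0u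
    simp only [Bool.not_not, Prod.mk.eta] at h5
    have h6 : d = dart (gvert ends d) h3 Lbl.A := hdu _ h3 _ d rfl hA
    have h7 : d0 = dart (gvert ends d) h3 Lbl.A := hdu _ h3 _ d0 hd0v h5.2
    rw [h6, ← h7]
    exact hd0u
  -- the opposite of a T-dart is a trivalent T-dart, similarly for B
  have labT : ∀ d : E × Bool, gdeg ends (gvert ends d) = 3 → lab d = Lbl.T →
      gdeg ends (gvert ends (d.1, !d.2)) = 3 ∧ lab (d.1, !d.2) = Lbl.T := by
    intro d h3 hT
    have h1 : gdeg ends (gvert ends (d.1, !d.2)) = 3 := by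
      rcases hval (gvert ends (d.1, !d.2)) with h | h
      · exfalso
        have h2 := hAattach (d.1, !d.2) h
        simp only [Bool.not_not, Prod.mk.eta] at h2
        exact absurd (hT.symm.trans h2.2) (by decide)
      · exact h
    refine ⟨h1, ?_⟩
    have hne1 : lab (d.1, !d.2) ≠ Lbl.A := by
      intro hA
      have h2 := labA_univ (d.1, !d.2) h1 hA
      simp only [Bool.not_not, Prod.mk.eta] at h2
      omega
    have hne2 : lab (d.1, !d.2) ≠ Lbl.B := by
      intro hB
      exact hnoTB d.1 d.2 h3 h1 ⟨by simpa [Prod.mk.eta] using hT, hB⟩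
    cases h : lab (d.1, !d.2)
    · rfl
    · exact absurd h hne2
    · exact absurd h hne1
  have labB : ∀ d : E × Bool, gdeg ends (gvert ends d) = 3 → lab d = Lbl.B →
      gdeg ends (gvert ends (d.1, !d.2)) = 3 ∧ lab (d.1, !d.2) = Lbl.B := by
    intro d h3 hB
    have h1 : gdeg ends (gvert ends (d.1, !d.2)) = 3 := by
      rcases hval (gvert ends (d.1, !d.2)) with h | h
      · exfalso
        have h2 := hAattach (d.1, !d.2) h
        simp only [Bool.not_not, Prod.mk.eta] at h2
        exact absurd (hB.symm.trans h2.2) (by decide)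
      · exact h
    refine ⟨h1, ?_⟩
    have hne1 : lab (d.1, !d.2) ≠ Lbl.A := by
      intro hA
      have h2 := labA_univ (d.1, !d.2) h1 hA
      simp only [Bool.not_not, Prod.mk.eta] at h2
      omega
    have hne2 : lab (d.1, !d.2) ≠ Lbl.T := by
      intro hT
      have h3' : gdeg ends (gvert ends (d.1, !(!d.2))) = 3 := by
        simpa [Bool.not_not, Prod.mk.eta] using h3
      refine hnoTB d.1 (!d.2) h1 h3' ⟨hT, ?_⟩
      simpa [Bool.not_not, Prod.mk.eta] using hB
    cases h : lab (d.1, !d.2)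
    · exact absurd h hne2
    · rfl
    · exact absurd h hne1
  -- subtype of trivalent vertices
  by_cases hX : Nonempty {v : V // gdeg ends v = 3}
  case neg =>
    -- no trivalent vertices: everything is empty
    haveI hVe : IsEmpty V := by
      constructor
      intro v
      have h1 : gdeg ends v = 1 := hval1 v (fun h => hX ⟨⟨v, h⟩⟩)
      have h2 := hAattach (ud v h1) (by rw [hudv]; exact h1)
      exact hX ⟨⟨_, h2.1⟩⟩
    haveI hEe : IsEmpty E := ⟨fun e => hVe.false (ends e).1⟩
    have ht0 : t = 0 := by rw [ht]; simp
    refine ⟨0, by omega, ?_⟩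
    haveI : IsEmpty (Fin (2 * 0)) := ⟨fun x => absurd x.2 (by omega)⟩
    haveI : IsEmpty (VM 0) := by unfold VM; infer_instance
    haveI : IsEmpty (EM 0) := by unfold EM; infer_instance
    exact ⟨Equiv.equivOfIsEmpty _ _, Equiv.equivOfIsEmpty _ _,
      fun e => (hEe.false e).elim⟩
  case pos =>
  set X := {v : V // gdeg ends v = 3} with hXdef
  -- the T and B involutions on trivalent vertices
  have key_T : ∀ (v) (hv : gdeg ends v = 3),
      gdeg ends (gvert ends ((dart v hv Lbl.T).1, !(dart v hv Lbl.T).2)) = 3 ∧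
      lab ((dart v hv Lbl.T).1, !(dart v hv Lbl.T).2) = Lbl.T := by
    intro v hv
    apply labT
    · rw [hdv]; exact hv
    · exact hdl v hv Lbl.T
  have key_B : ∀ (v) (hv : gdeg ends v = 3),
      gdeg ends (gvert ends ((dart v hv Lbl.B).1, !(dart v hv Lbl.B).2)) = 3 ∧
      lab ((dart v hv Lbl.B).1, !(dart v hv Lbl.B).2) = Lbl.B := by
    intro v hv
    apply labB
    · rw [hdv]; exact hv
    · exact hdl v hv Lbl.B
  have key_A : ∀ (v) (hv : gdeg ends v = 3),
      gdeg ends (gvert ends ((dart v hv Lbl.A).1, !(dart v hv Lbl.A).2)) = 1 := by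
    intro v hv
    apply labA_univ
    · rw [hdv]; exact hv
    · exact hdl v hv Lbl.A
  set σT : X → X := fun x =>
    ⟨gvert ends ((dart x.1 x.2 Lbl.T).1, !(dart x.1 x.2 Lbl.T).2), (key_T x.1 x.2).1⟩
    with hσT
  set σB : X → X := fun x =>
    ⟨gvert ends ((dart x.1 x.2 Lbl.B).1, !(dart x.1 x.2 Lbl.B).2), (key_B x.1 x.2).1⟩
    with hσB
  -- the opposite of the T-dart of x is the T-dart of σT x
  have oppT : ∀ x : X, ((dart x.1 x.2 Lbl.T).1, !(dart x.1 x.2 Lbl.T).2)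
      = dart (σT x).1 (σT x).2 Lbl.T := by
    intro x
    exact hdu _ _ _ _ rfl (key_T x.1 x.2).2
  have oppB : ∀ x : X, ((dart x.1 x.2 Lbl.B).1, !(dart x.1 x.2 Lbl.B).2)
      = dart (σB x).1 (σB x).2 Lbl.B := by
    intro x
    exact hdu _ _ _ _ rfl (key_B x.1 x.2).2
  have σT_inv : ∀ x : X, σT (σT x) = x := by
    intro x
    apply Subtype.ext
    show gvert ends ((dart (σT x).1 (σT x).2 Lbl.T).1, !(dart (σT x).1 (σT x).2 Lbl.T).2) = x.1
    rw [← oppT x]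
    simp only [Bool.not_not, Prod.mk.eta]
    exact hdv x.1 x.2 Lbl.T
  have σB_inv : ∀ x : X, σB (σB x) = x := by
    intro x
    apply Subtype.ext
    show gvert ends ((dart (σB x).1 (σB x).2 Lbl.B).1, !(dart (σB x).1 (σB x).2 Lbl.B).2) = x.1
    rw [← oppB x]
    simp only [Bool.not_not, Prod.mk.eta]
    exact hdv x.1 x.2 Lbl.B
  have σT_ne : ∀ x : X, σT x ≠ x := by
    intro x h
    have h1 : gvert ends ((dart x.1 x.2 Lbl.T).1, !(dart x.1 x.2 Lbl.T).2) = x.1 :=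
      congrArg Subtype.val h
    have h2 := hdu x.1 x.2 Lbl.T _ h1 (key_T x.1 x.2).2
    simp [Prod.ext_iff] at h2
  have σB_ne : ∀ x : X, σB x ≠ x := by
    intro x h
    have h1 : gvert ends ((dart x.1 x.2 Lbl.B).1, !(dart x.1 x.2 Lbl.B).2) = x.1 :=
      congrArg Subtype.val h
    have h2 := hdu x.1 x.2 Lbl.B _ h1 (key_B x.1 x.2).2
    simp [Prod.ext_iff] at h2
  -- projection of any vertex to a trivalent vertex
  set π : V → X := fun v =>
    if h : gdeg ends v = 3 then ⟨v, h⟩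
    else ⟨gvert ends ((ud v (hval1 v h)).1, !(ud v (hval1 v h)).2),
      (hAattach (ud v (hval1 v h)) (by rw [hudv]; exact hval1 v h)).1⟩ with hπ
  have hπ3 : ∀ (v) (h : gdeg ends v = 3), π v = ⟨v, h⟩ := by
    intro v h; simp [hπ, h]
  -- one edge step gives equality or a σ-step between projections
  have hadj : ∀ (e : E) (v w : V), ends e = (v, w) →
      π w = π v ∨ π w = σT (π v) ∨ π w = σB (π v) := by
    intro e v w he
    have hv1 : gvert ends (e, true) = v := by simp [gvert, he]
    have hw1 : gvert ends (e, false) = w := by simp [gvert, he]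
    by_cases hv : gdeg ends v = 3
    · by_cases hw : gdeg ends w = 3
      · -- both trivalent
        rw [hπ3 v hv, hπ3 w hw]
        cases hl : lab (e, true)
        · -- T
          right; left
          have h1 : (e, true) = dart v hv Lbl.T := hdu v hv Lbl.T _ hv1 hl
          apply Subtype.ext
          show w = gvert ends ((dart v hv Lbl.T).1, !(dart v hv Lbl.T).2)
          rw [← h1]
          simpa using hw1.symm
        · -- B
          right; right
          have h1 : (e, true) = dart v hv Lbl.B := hdu v hv Lbl.B _ hv1 hl
          apply Subtype.ext
          show w = gvert ends ((dart v hv Lbl.B).1, !(dart v hv Lbl.B).2)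
          rw [← h1]
          simpa using hw1.symm
        · -- A: impossible
          exfalso
          have h1 := labA_univ (e, true) (by rw [hv1]; exact hv) hl
          simp only at h1
          rw [show ((e, true).1, !(e, true).2) = (e, false) by rfl] at h1
          rw [hw1] at h1
          omega
      · -- w univalent: π w = v
        left
        have hw1' : gdeg ends w = 1 := hval1 w hw
        have hud1 : (e, false) = ud w hw1' := hudu w hw1' _ hw1
        rw [hπ3 v hv]
        simp only [hπ, dif_neg hw]
        apply Subtype.ext
        show gvert ends ((ud w (hval1 w hw)).1, !(ud w (hval1 w hw)).2) = v
        rw [← hud1]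
        simpa using hv1
    · -- v univalent: π v = w, and w is trivalent
      left
      have hv1' : gdeg ends v = 1 := hval1 v hv
      have hud1 : (e, true) = ud v hv1' := hudu v hv1' _ hv1
      have hw3 : gdeg ends w = 3 := by
        have h2 := hAattach (e, true) (by rw [hv1]; exact hv1')
        rw [show ((e, true).1, !(e, true).2) = (e, false) by rfl, hw1] at h2
        exact h2.1
      rw [hπ3 w hw3]
      simp only [hπ, dif_neg hv]
      apply Subtype.ext
      show w = gvert ends ((ud v (hval1 v hv)).1, !(ud v (hval1 v hv)).2)
      rw [← hud1]
      simpa using hw1.symm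
  have hconnX : ∀ x y : X, Relation.ReflTransGen (fun a b => b = σT a ∨ b = σB a) x y := by
    have main : ∀ v w : V,
        Relation.ReflTransGen (fun a b => ∃ e : E, ends e = (a, b) ∨ ends e = (b, a)) v w →
        Relation.ReflTransGen (fun a b : X => b = σT a ∨ b = σB a) (π v) (π w) := by
      intro v w h
      induction h with
      | refl => exact .refl
      | @tail b c _ hrel ih =>
        obtain ⟨e, he⟩ := hrel
        have hstep : π c = π b ∨ π c = σT (π b) ∨ π c = σB (π b) := by
          rcases he with he | he
          · exact hadj e b c he
          · rcases hadj e c b he with h1 | h1 | h1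
            · exact Or.inl h1.symm
            · right; left
              rw [h1, σT_inv]
            · right; right
              rw [h1, σB_inv]
        rcases hstep with h1 | h1 | h1
        · rw [← h1] at ih; exact ih
        · exact ih.tail (Or.inl h1)
        · exact ih.tail (Or.inr h1)
    intro x y
    have h := main x.1 y.1 (hconn x.1 y.1)
    rwa [hπ3 x.1 x.2, hπ3 y.1 y.2, Subtype.coe_eta, Subtype.coe_eta] at h
  obtain ⟨k, hk0, a, hper, hinj, hsurj, hfa, hga⟩ :=
    cycle_lemma σT σB σT_inv σB_inv σT_ne σB_ne hconnX
  have hmod : ∀ n, a n = a (n % (2*k)) := by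
    intro n
    induction n using Nat.strong_induction_on with
    | _ n ih =>
      rcases Nat.lt_or_ge n (2*k) with h | h
      · rw [Nat.mod_eq_of_lt h]
      · have h1 : n - 2*k + 2*k = n := Nat.sub_add_cancel h
        have h2 := hper (n - 2*k)
        rw [h1] at h2
        rw [h2, ih (n - 2*k) (by omega), ← Nat.mod_eq_sub_mod h]
  set aF : Fin (2*k) → X := fun i => a i with haF
  have haFbij : Function.Bijective aF := by
    constructor
    · intro i j h
      exact Fin.ext (hinj i j i.isLt j.isLt h)
    · intro x
      obtain ⟨n, hn, h⟩ := hsurj x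
      exact ⟨⟨n, hn⟩, h⟩
  set aE : Fin (2*k) ≃ X := Equiv.ofBijective aF haFbij with haE
  have ht2k : t = 2*k := by
    have h1 : Fintype.card X = 2*k :=
      (Fintype.card_congr aE).symm.trans (Fintype.card_fin _)
    rw [ht, ← Fintype.card_subtype]
    exact h1
  refine ⟨k, ht2k, ?_⟩
  -- the univalent vertex attached to a trivalent vertex
  set uvert : X → V := fun x =>
    gvert ends ((dart x.1 x.2 Lbl.A).1, !(dart x.1 x.2 Lbl.A).2) with huvert
  have huv1 : ∀ x : X, gdeg ends (uvert x) = 1 := fun x => key_A x.1 x.2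
  have hπu : ∀ x : X, π (uvert x) = x := by
    intro x
    have h1 : ¬ gdeg ends (uvert x) = 3 := by rw [huv1 x]; omega
    have h2 : ((dart x.1 x.2 Lbl.A).1, !(dart x.1 x.2 Lbl.A).2)
        = ud (uvert x) (hval1 _ h1) := hudu _ _ _ rfl
    simp only [hπ, dif_neg h1]
    apply Subtype.ext
    show gvert ends ((ud (uvert x) (hval1 _ h1)).1, !(ud (uvert x) (hval1 _ h1)).2) = x.1
    rw [← h2]
    simp only [Bool.not_not, Prod.mk.eta]
    exact hdv x.1 x.2 Lbl.A
  have huπ : ∀ (w : V) (hw : gdeg ends w = 1), uvert (π w) = w := by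
    intro w hw
    have h1 : ¬ gdeg ends w = 3 := by omega
    have hA := hAattach (ud w (hval1 w h1)) (by rw [hudv]; exact hval1 w h1)
    have h2 : ((ud w (hval1 w h1)).1, !(ud w (hval1 w h1)).2)
        = dart (π w).1 (π w).2 Lbl.A := by
      apply hdu
      · simp only [hπ, dif_neg h1]
      · exact hA.2
    show gvert ends ((dart (π w).1 (π w).2 Lbl.A).1, !(dart (π w).1 (π w).2 Lbl.A).2) = w
    rw [← h2]
    simp only [Bool.not_not, Prod.mk.eta]
    exact hudv w (hval1 w h1)
  -- the vertex equivalence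
  set eVf : V → Fin (2*k) ⊕ Fin (2*k) := fun v =>
    if h : gdeg ends v = 3 then Sum.inl (aE.symm ⟨v, h⟩) else Sum.inr (aE.symm (π v))
    with heVf
  set eVi : Fin (2*k) ⊕ Fin (2*k) → V :=
    Sum.elim (fun i => (aE i).1) (fun i => uvert (aE i)) with heVi
  have h_left : Function.LeftInverse eVi eVf := by
    intro v
    by_cases h : gdeg ends v = 3
    · simp only [heVf, dif_pos h, heVi, Sum.elim_inl]
      rw [Equiv.apply_symm_apply]
    · simp only [heVf, dif_neg h, heVi, Sum.elim_inr]
      rw [Equiv.apply_symm_apply]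
      exact huπ v (hval1 v h)
  have h_right : Function.RightInverse eVi eVf := by
    intro s
    rcases s with i | i
    · simp only [heVi, Sum.elim_inl, heVf, dif_pos (aE i).2]
      rw [Subtype.coe_eta, Equiv.symm_apply_apply]
    · have h1 : ¬ gdeg ends (uvert (aE i)) = 3 := by rw [huv1 (aE i)]; omega
      simp only [heVi, Sum.elim_inr, heVf, dif_neg h1]
      rw [hπu (aE i), Equiv.symm_apply_apply]
  set eV : V ≃ (Fin (2*k) ⊕ Fin (2*k)) := ⟨eVf, eVi, h_left, h_right⟩ with heV
  have heVl : ∀ i : Fin (2*k), eVf (aF i).1 = Sum.inl i := by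
    intro i
    simp only [heVf, dif_pos (aF i).2]
    rw [Subtype.coe_eta]
    congr 1
    exact aE.symm_apply_eq.mpr rfl
  have heVr : ∀ i : Fin (2*k), eVf (uvert (aF i)) = Sum.inr i := by
    intro i
    have h1 : ¬ gdeg ends (uvert (aF i)) = 3 := by rw [huv1 (aF i)]; omega
    simp only [heVf, dif_neg h1]
    rw [hπu (aF i)]
    congr 1
    exact aE.symm_apply_eq.mpr rfl
  -- partner facts
  have hfb : ∀ n, n % 2 = 1 → σT (a n) = a (n - 1) := by
    intro n hp
    have h1 : σT (a (n-1)) = a n := by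
      have := hfa (n-1) (by omega)
      rwa [show n - 1 + 1 = n by omega] at this
    rw [← h1, σT_inv]
  have hgb : ∀ n, n % 2 = 0 → σB (a n) = a (n + 2*k - 1) := by
    intro n hp
    have h1 : σB (a (n + 2*k - 1)) = a n := by
      have h2 := hga (n + 2*k - 1) (by omega)
      rw [show n + 2*k - 1 + 1 = n + 2*k by omega, hper n] at h2
      exact h2
    rw [← h1, σB_inv]
  have hrotT : ∀ i : Fin (2*k), (i:ℕ) % 2 = 0 → σT (aF i) = aF (finRotate (2*k) i) := by
    intro i hp
    show σT (a (i:ℕ)) = a ((finRotate (2*k) i : ℕ))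
    rw [rot_val (by omega) i, ← hmod, hfa (i:ℕ) hp]
  have hrotB : ∀ i : Fin (2*k), (i:ℕ) % 2 = 1 → σB (aF i) = aF (finRotate (2*k) i) := by
    intro i hp
    show σB (a (i:ℕ)) = a ((finRotate (2*k) i : ℕ))
    rw [rot_val (by omega) i, ← hmod, hga (i:ℕ) hp]
  -- edge identification lemmas
  have edge_eq_T : ∀ (x y : X), (dart x.1 x.2 Lbl.T).1 = (dart y.1 y.2 Lbl.T).1 →
      y = x ∨ y = σT x := by
    intro x y h
    rcases hdd (dart x.1 x.2 Lbl.T) (dart y.1 y.2 Lbl.T) h with h1 | h1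
    · left
      apply Subtype.ext
      rw [← hdv y.1 y.2 Lbl.T, h1, hdv]
    · right
      apply Subtype.ext
      rw [← hdv y.1 y.2 Lbl.T, h1, oppT x]
      exact hdv _ _ _
  have edge_eq_B : ∀ (x y : X), (dart x.1 x.2 Lbl.B).1 = (dart y.1 y.2 Lbl.B).1 →
      y = x ∨ y = σB x := by
    intro x y h
    rcases hdd (dart x.1 x.2 Lbl.B) (dart y.1 y.2 Lbl.B) h with h1 | h1
    · left
      apply Subtype.ext
      rw [← hdv y.1 y.2 Lbl.B, h1, hdv]
    · right
      apply Subtype.ext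
      rw [← hdv y.1 y.2 Lbl.B, h1, oppB x]
      exact hdv _ _ _
  have edge_ne_TB : ∀ (x y : X), (dart x.1 x.2 Lbl.T).1 ≠ (dart y.1 y.2 Lbl.B).1 := by
    intro x y h
    rcases hdd (dart x.1 x.2 Lbl.T) (dart y.1 y.2 Lbl.B) h with h1 | h1
    · have h2 : Lbl.B = Lbl.T := by rw [← hdl y.1 y.2 Lbl.B, h1, hdl]
      exact absurd h2 (by decide)
    · have h2 : Lbl.B = Lbl.T := by
        rw [← hdl y.1 y.2 Lbl.B, h1]
        exact (key_T x.1 x.2).2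
      exact absurd h2 (by decide)
  have edge_ne_TA : ∀ (x y : X), (dart x.1 x.2 Lbl.T).1 ≠ (dart y.1 y.2 Lbl.A).1 := by
    intro x y h
    rcases hdd (dart x.1 x.2 Lbl.T) (dart y.1 y.2 Lbl.A) h with h1 | h1
    · have h2 : Lbl.A = Lbl.T := by rw [← hdl y.1 y.2 Lbl.A, h1, hdl]
      exact absurd h2 (by decide)
    · have h2 : Lbl.A = Lbl.T := by
        rw [← hdl y.1 y.2 Lbl.A, h1]
        exact (key_T x.1 x.2).2
      exact absurd h2 (by decide)
  have edge_ne_BA : ∀ (x y : X), (dart x.1 x.2 Lbl.B).1 ≠ (dart y.1 y.2 Lbl.A).1 := by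
    intro x y h
    rcases hdd (dart x.1 x.2 Lbl.B) (dart y.1 y.2 Lbl.A) h with h1 | h1
    · have h2 : Lbl.A = Lbl.B := by rw [← hdl y.1 y.2 Lbl.A, h1, hdl]
      exact absurd h2 (by decide)
    · have h2 : Lbl.A = Lbl.B := by
        rw [← hdl y.1 y.2 Lbl.A, h1]
        exact (key_B x.1 x.2).2
      exact absurd h2 (by decide)
  have edge_eq_A : ∀ (x y : X), (dart x.1 x.2 Lbl.A).1 = (dart y.1 y.2 Lbl.A).1 →
      y = x := by
    intro x y h
    rcases hdd (dart x.1 x.2 Lbl.A) (dart y.1 y.2 Lbl.A) h with h1 | h1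
    · apply Subtype.ext
      rw [← hdv y.1 y.2 Lbl.A, h1, hdv]
    · exfalso
      have h2 : gdeg ends (gvert ends (dart y.1 y.2 Lbl.A)) = 1 := by
        rw [h1]
        exact key_A x.1 x.2
      rw [hdv] at h2
      have := y.2
      omega
  have partnerT : ∀ i j : Fin (2*k), (i:ℕ) % 2 = 0 → (j:ℕ) % 2 = 0 →
      aF j = σT (aF i) → False := by
    intro i j hpi hpj h
    have h1 : σT (aF i) = a ((i:ℕ)+1) := hfa (i:ℕ) hpi
    have h2 : (i:ℕ) + 1 < 2*k := by omega
    have h3 : (j:ℕ) = (i:ℕ) + 1 := hinj _ _ j.isLt h2 (by rw [← h1, ← h])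
    omega
  have partnerB : ∀ i j : Fin (2*k), (i:ℕ) % 2 = 1 → (j:ℕ) % 2 = 1 →
      aF j = σB (aF i) → False := by
    intro i j hpi hpj h
    have h1 : σB (aF i) = a (((i:ℕ)+1) % (2*k)) := by
      rw [hga (i:ℕ) hpi, hmod ((i:ℕ)+1)]
    have h2 : ((i:ℕ)+1) % (2*k) < 2*k := Nat.mod_lt _ (by omega)
    have h3 : (j:ℕ) = ((i:ℕ)+1) % (2*k) := hinj _ _ j.isLt h2 (by rw [← h1, ← h])
    rcases Nat.lt_or_ge ((i:ℕ)+1) (2*k) with h4 | h4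
    · rw [Nat.mod_eq_of_lt h4] at h3
      omega
    · have h5 : (i:ℕ) + 1 = 2*k := by omega
      rw [h5, Nat.mod_self] at h3
      omega
  -- the edge map
  set Φ : (Fin (2*k) ⊕ Fin (2*k)) → E := Sum.elim
    (fun i => (dart (aF i).1 (aF i).2 (if (i:ℕ) % 2 = 0 then Lbl.T else Lbl.B)).1)
    (fun i => (dart (aF i).1 (aF i).2 Lbl.A).1) with hΦ
  have hΦinjl : ∀ i j : Fin (2*k), Φ (Sum.inl i) = Φ (Sum.inl j) → i = j := by
    intro i j h
    simp only [hΦ, Sum.elim_inl] at h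
    rcases eq_or_ne ((i:ℕ) % 2) 0 with hpi | hpi <;>
      rcases eq_or_ne ((j:ℕ) % 2) 0 with hpj | hpj
    · rw [if_pos hpi, if_pos hpj] at h
      rcases edge_eq_T (aF i) (aF j) h with h1 | h1
      · exact (haFbij.1 h1).symm
      · exact absurd h1 (fun h1 => partnerT i j hpi hpj h1)
    · rw [if_pos hpi, if_neg hpj] at h
      exact absurd h (edge_ne_TB (aF i) (aF j))
    · rw [if_neg hpi, if_pos hpj] at h
      exact absurd h.symm (edge_ne_TB (aF j) (aF i))
    · rw [if_neg hpi, if_neg hpj] at h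
      rcases edge_eq_B (aF i) (aF j) h with h1 | h1
      · exact (haFbij.1 h1).symm
      · exact absurd h1 (fun h1 => partnerB i j (by omega) (by omega) h1)
  have hΦinjlr : ∀ i j : Fin (2*k), Φ (Sum.inl i) = Φ (Sum.inr j) → False := by
    intro i j h
    simp only [hΦ, Sum.elim_inl, Sum.elim_inr] at h
    rcases eq_or_ne ((i:ℕ) % 2) 0 with hpi | hpi
    · rw [if_pos hpi] at h
      exact edge_ne_TA (aF i) (aF j) h
    · rw [if_neg hpi] at h
      exact edge_ne_BA (aF i) (aF j) h
  have hΦinj : Function.Injective Φ := by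
    intro s s' h
    rcases s with i | i <;> rcases s' with j | j
    · rw [hΦinjl i j h]
    · exact absurd h (fun h => hΦinjlr i j h)
    · exact absurd h.symm (fun h => hΦinjlr j i h)
    · simp only [hΦ, Sum.elim_inr] at h
      exact congrArg Sum.inr (haFbij.1 (edge_eq_A (aF j) (aF i) h.symm))
  have dart_mk : ∀ (x : X) (v : V) (hv : gdeg ends v = 3) (l : Lbl),
      x = ⟨v, hv⟩ → dart x.1 x.2 l = dart v hv l := by
    rintro x v hv l rfl
    rfl
  have dart_congrX : ∀ (x y : X) (l : Lbl), x = y → dart x.1 x.2 l = dart y.1 y.2 l := by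
    rintro x y l rfl
    rfl
  have hΦsurj : Function.Surjective Φ := by
    intro e
    by_cases h3 : gdeg ends (gvert ends (e, true)) = 3
    · cases hl : lab (e, true)
      · -- T-labelled dart at a trivalent vertex
        have h1 : (e, true) = dart (gvert ends (e, true)) h3 Lbl.T := hdu _ h3 _ _ rfl hl
        obtain ⟨n, hn, hx⟩ := hsurj ⟨gvert ends (e, true), h3⟩
        rcases eq_or_ne (n % 2) 0 with hp | hp
        · refine ⟨Sum.inl ⟨n, hn⟩, ?_⟩
          simp only [hΦ, Sum.elim_inl]
          have hc : ((⟨n, hn⟩ : Fin (2*k)) : ℕ) % 2 = 0 := hp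
          rw [if_pos hc, dart_mk _ _ _ Lbl.T hx, ← h1]
        · refine ⟨Sum.inl ⟨n - 1, by omega⟩, ?_⟩
          simp only [hΦ, Sum.elim_inl]
          have hc : ((⟨n - 1, by omega⟩ : Fin (2*k)) : ℕ) % 2 = 0 := by
            show (n - 1) % 2 = 0
            omega
          rw [if_pos hc]
          have h2 : aF ⟨n - 1, by omega⟩ = σT (a n) := by
            show a (n - 1) = σT (a n)
            rw [hfb n (by omega)]
          have h4 : (dart (σT (a n)).1 (σT (a n)).2 Lbl.T).1
              = (dart (a n).1 (a n).2 Lbl.T).1 :=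
            (congrArg Prod.fst (oppT (a n))).symm
          rw [dart_congrX _ _ Lbl.T h2, h4, dart_mk _ _ _ Lbl.T hx, ← h1]
      · -- B-labelled dart at a trivalent vertex
        have h1 : (e, true) = dart (gvert ends (e, true)) h3 Lbl.B := hdu _ h3 _ _ rfl hl
        obtain ⟨n, hn, hx⟩ := hsurj ⟨gvert ends (e, true), h3⟩
        rcases eq_or_ne (n % 2) 1 with hp | hp
        · refine ⟨Sum.inl ⟨n, hn⟩, ?_⟩
          simp only [hΦ, Sum.elim_inl]
          have hc : ¬ ((⟨n, hn⟩ : Fin (2*k)) : ℕ) % 2 = 0 := by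
            show ¬ n % 2 = 0
            omega
          rw [if_neg hc, dart_mk _ _ _ Lbl.B hx, ← h1]
        · -- n even: use index (n + 2k - 1) % 2k
          have hj : (n + 2*k - 1) % (2*k) < 2*k := Nat.mod_lt _ (by omega)
          have hjodd : ((n + 2*k - 1) % (2*k)) % 2 = 1 := by
            rcases eq_or_ne n 0 with h0 | h0
            · rw [h0, Nat.mod_eq_of_lt (show 0 + 2*k - 1 < 2*k by omega)]
              omega
            · rw [show n + 2*k - 1 = (n - 1) + 2*k by omega, Nat.add_mod_right,
                Nat.mod_eq_of_lt (show n - 1 < 2*k by omega)]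
              omega
          refine ⟨Sum.inl ⟨(n + 2*k - 1) % (2*k), hj⟩, ?_⟩
          simp only [hΦ, Sum.elim_inl]
          have hc : ¬ ((⟨(n + 2*k - 1) % (2*k), hj⟩ : Fin (2*k)) : ℕ) % 2 = 0 := by
            show ¬ ((n + 2*k - 1) % (2*k)) % 2 = 0
            omega
          rw [if_neg hc]
          have h2 : aF ⟨(n + 2*k - 1) % (2*k), hj⟩ = σB (a n) := by
            show a ((n + 2*k - 1) % (2*k)) = σB (a n)
            rw [← hmod, hgb n (by omega)]
          have h4 : (dart (σB (a n)).1 (σB (a n)).2 Lbl.B).1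
              = (dart (a n).1 (a n).2 Lbl.B).1 :=
            (congrArg Prod.fst (oppB (a n))).symm
          rw [dart_congrX _ _ Lbl.B h2, h4, dart_mk _ _ _ Lbl.B hx, ← h1]
      · -- A-labelled dart at a trivalent vertex
        have h1 : (e, true) = dart (gvert ends (e, true)) h3 Lbl.A := hdu _ h3 _ _ rfl hl
        obtain ⟨n, hn, hx⟩ := hsurj ⟨gvert ends (e, true), h3⟩
        refine ⟨Sum.inr ⟨n, hn⟩, ?_⟩
        simp only [hΦ, Sum.elim_inr]
        rw [dart_mk _ _ _ Lbl.A hx, ← h1]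
    · -- the dart (e, true) is at a univalent vertex
      have h1' : gdeg ends (gvert ends (e, true)) = 1 := hval1 _ h3
      have h2 := hAattach (e, true) h1'
      have h2' : gdeg ends (gvert ends (e, false)) = 3 ∧ lab (e, false) = Lbl.A := h2
      obtain ⟨n, hn, hx⟩ := hsurj ⟨gvert ends (e, false), h2'.1⟩
      refine ⟨Sum.inr ⟨n, hn⟩, ?_⟩
      simp only [hΦ, Sum.elim_inr]
      have h1 : (e, false) = dart (gvert ends (e, false)) h2'.1 Lbl.A :=
        hdu _ _ _ _ rfl h2'.2
      rw [dart_mk _ _ _ Lbl.A hx, ← h1]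
  set bijΦ : (Fin (2*k) ⊕ Fin (2*k)) ≃ E := Equiv.ofBijective Φ ⟨hΦinj, hΦsurj⟩ with hbijΦ
  refine ⟨eV, bijΦ.symm, ?_⟩
  have hΦall : ∀ e : E, Φ (bijΦ.symm e) = e := fun e => bijΦ.apply_symm_apply e
  have heVcoe : ∀ v : V, eV v = eVf v := fun _ => rfl
  suffices hmain : ∀ (s : Fin (2*k) ⊕ Fin (2*k)) (e : E), Φ s = e →
      (endsM k s = (eV (ends e).1, eV (ends e).2) ∧
        ∀ b : Bool, gdeg ends (gvert ends (e, b)) = 3 → lab (e, b) = labM k (s, b)) ∨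
      (endsM k s = (eV (ends e).2, eV (ends e).1) ∧
        ∀ b : Bool, gdeg ends (gvert ends (e, b)) = 3 → lab (e, b) = labM k (s, !b)) by
    intro e
    exact hmain (bijΦ.symm e) e (hΦall e)
  intro s e hΦs
  rcases s with i | i
  · -- cycle edge
    rcases Nat.mod_two_eq_zero_or_one (i : ℕ) with hp | hp
    · -- T edge
      have hde : (dart (aF i).1 (aF i).2 Lbl.T).1 = e := by
        rw [← hΦs]
        simp only [hΦ, Sum.elim_inl]
        rw [if_pos hp]
      have hlabe : ∀ b : Bool, lab (e, b) = Lbl.T := by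
        intro b
        rcases hdd (dart (aF i).1 (aF i).2 Lbl.T) (e, b) (by rw [hde]) with h1 | h1
        · rw [h1]
          exact hdl _ _ _
        · rw [h1]
          exact (key_T (aF i).1 (aF i).2).2
      have hlabM : ∀ b : Bool, labM k (Sum.inl i, b) = Lbl.T := by
        intro b
        show (if (i : ℕ) % 2 = 0 then Lbl.T else Lbl.B) = Lbl.T
        rw [if_pos hp]
      have hv1 : gvert ends (e, (dart (aF i).1 (aF i).2 Lbl.T).2) = (aF i).1 := by
        have hpe : (e, (dart (aF i).1 (aF i).2 Lbl.T).2) = dart (aF i).1 (aF i).2 Lbl.T := by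
          rw [← hde]
        rw [hpe, hdv]
      have hv2 : gvert ends (e, !(dart (aF i).1 (aF i).2 Lbl.T).2)
          = (aF (finRotate (2*k) i)).1 := by
        have h5 : (e, !(dart (aF i).1 (aF i).2 Lbl.T).2)
            = dart (σT (aF i)).1 (σT (aF i)).2 Lbl.T := by
          rw [← hde]
          exact oppT (aF i)
        rw [h5, hdv]
        exact congrArg Subtype.val (hrotT i hp)
      cases hb : (dart (aF i).1 (aF i).2 Lbl.T).2
      · -- dart points at the second endpoint: reversed orientation
        right
        constructor
        · rw [hb] at hv1 hv2
          have he1 : (ends e).1 = (aF (finRotate (2*k) i)).1 := hv2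
          have he2 : (ends e).2 = (aF i).1 := hv1
          rw [he1, he2, heVcoe, heVcoe, heVl, heVl]
          rfl
        · intro b _
          rw [hlabe b]
          exact (hlabM (!b)).symm
      · left
        constructor
        · rw [hb] at hv1 hv2
          have he1 : (ends e).1 = (aF i).1 := hv1
          have he2 : (ends e).2 = (aF (finRotate (2*k) i)).1 := hv2
          rw [he1, he2, heVcoe, heVcoe, heVl, heVl]
          rfl
        · intro b _
          rw [hlabe b]
          exact (hlabM b).symm
    · -- B edge
      have hde : (dart (aF i).1 (aF i).2 Lbl.B).1 = e := by
        rw [← hΦs]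
        simp only [hΦ, Sum.elim_inl]
        rw [if_neg (by omega : ¬ (i : ℕ) % 2 = 0)]
      have hlabe : ∀ b : Bool, lab (e, b) = Lbl.B := by
        intro b
        rcases hdd (dart (aF i).1 (aF i).2 Lbl.B) (e, b) (by rw [hde]) with h1 | h1
        · rw [h1]
          exact hdl _ _ _
        · rw [h1]
          exact (key_B (aF i).1 (aF i).2).2
      have hlabM : ∀ b : Bool, labM k (Sum.inl i, b) = Lbl.B := by
        intro b
        show (if (i : ℕ) % 2 = 0 then Lbl.T else Lbl.B) = Lbl.B
        rw [if_neg (by omega : ¬ (i : ℕ) % 2 = 0)]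
      have hv1 : gvert ends (e, (dart (aF i).1 (aF i).2 Lbl.B).2) = (aF i).1 := by
        have hpe : (e, (dart (aF i).1 (aF i).2 Lbl.B).2) = dart (aF i).1 (aF i).2 Lbl.B := by
          rw [← hde]
        rw [hpe, hdv]
      have hv2 : gvert ends (e, !(dart (aF i).1 (aF i).2 Lbl.B).2)
          = (aF (finRotate (2*k) i)).1 := by
        have h5 : (e, !(dart (aF i).1 (aF i).2 Lbl.B).2)
            = dart (σB (aF i)).1 (σB (aF i)).2 Lbl.B := by
          rw [← hde]
          exact oppB (aF i)
        rw [h5, hdv]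
        exact congrArg Subtype.val (hrotB i hp)
      cases hb : (dart (aF i).1 (aF i).2 Lbl.B).2
      · right
        constructor
        · rw [hb] at hv1 hv2
          have he1 : (ends e).1 = (aF (finRotate (2*k) i)).1 := hv2
          have he2 : (ends e).2 = (aF i).1 := hv1
          rw [he1, he2, heVcoe, heVcoe, heVl, heVl]
          rfl
        · intro b _
          rw [hlabe b]
          exact (hlabM (!b)).symm
      · left
        constructor
        · rw [hb] at hv1 hv2
          have he1 : (ends e).1 = (aF i).1 := hv1
          have he2 : (ends e).2 = (aF (finRotate (2*k) i)).1 := hv2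
          rw [he1, he2, heVcoe, heVcoe, heVl, heVl]
          rfl
        · intro b _
          rw [hlabe b]
          exact (hlabM b).symm
  · -- pendant edge
    have hde : (dart (aF i).1 (aF i).2 Lbl.A).1 = e := by
      rw [← hΦs]
      simp only [hΦ, Sum.elim_inr]
    have hdeg2 : gdeg ends (gvert ends ((dart (aF i).1 (aF i).2 Lbl.A).1,
        !(dart (aF i).1 (aF i).2 Lbl.A).2)) = 1 := key_A (aF i).1 (aF i).2
    have hlabe : ∀ b : Bool, gdeg ends (gvert ends (e, b)) = 3 → lab (e, b) = Lbl.A := by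
      intro b h3b
      rcases hdd (dart (aF i).1 (aF i).2 Lbl.A) (e, b) (by rw [hde]) with h1 | h1
      · rw [h1]
        exact hdl _ _ _
      · exfalso
        rw [h1] at h3b
        omega
    have hlabM : ∀ b : Bool, labM k (Sum.inr i, b) = Lbl.A := fun _ => rfl
    have hv1 : gvert ends (e, (dart (aF i).1 (aF i).2 Lbl.A).2) = (aF i).1 := by
      have hpe : (e, (dart (aF i).1 (aF i).2 Lbl.A).2) = dart (aF i).1 (aF i).2 Lbl.A := by
        rw [← hde]
      rw [hpe, hdv]
    have hv2 : gvert ends (e, !(dart (aF i).1 (aF i).2 Lbl.A).2) = uvert (aF i) := by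
      rw [← hde]
    cases hb : (dart (aF i).1 (aF i).2 Lbl.A).2
    · -- dart at trivalent vertex is (e, false): ends e = (uvert, trivalent)
      left
      constructor
      · rw [hb] at hv1 hv2
        have he1 : (ends e).1 = uvert (aF i) := hv2
        have he2 : (ends e).2 = (aF i).1 := hv1
        rw [he1, he2, heVcoe, heVcoe, heVl, heVr]
        rfl
      · intro b h3b
        rw [hlabe b h3b]
        exact (hlabM b).symm
    · right
      constructor
      · rw [hb] at hv1 hv2
        have he1 : (ends e).1 = (aF i).1 := hv1
        have he2 : (ends e).2 = uvert (aF i) := hv2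
        rw [he1, he2, heVcoe, heVcoe, heVl, heVr]
        rfl
      · intro b h3b
        rw [hlabe b h3b]
        exact (hlabM (!b)).symm
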